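/- arXiv:1606.01974 — 6 statements merged into one kernel-verified Lean document; each statement's English description precedes it below -/
import Mathlib

section
/- Let F be a field and D a division ring containing F in its center and finite-dimensional over F, and let L be an F-basis of D. If L is semi-multiplicative (for all u, v ∈ L there exist c ∈ F and ℓ ∈ L with u·v = c·ℓ), then L satisfies condition (2.1): for all f, w, z ∈ L one has f*(w⁻¹·z) = w*(z·f⁻¹). -/
/-!
Left multiplication by `B w` and right multiplication by `B f` are injective linear maps sending
each basis vector to a nonzero multiple of a basis vector, with injective index maps. Such a map
`T` with `T (B g) = c g • B (τ g)` scales the `g`-th coordinate into the `τ g`-th one. Writing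
`B w * B f = c • B l`, both `c • f*(w⁻¹ z)` and `c • w*(z f⁻¹)` are therefore the `l`-th
coordinate of `B z`, and `c ≠ 0`.
-/

namespace Module.Basis

section CommSemiring

variable {R M ι : Type*} [CommSemiring R] [AddCommMonoid M] [Module R M] (b : Basis ι R M)
  {T : M →ₗ[R] M} {c : ι → R} {τ : ι → ι}

theorem repr_map_apply_index (hτ : Function.Injective τ) (hTb : ∀ i, T (b i) = c i • b (τ i))
    (x : M) (i : ι) : b.repr (T x) (τ i) = c i * b.repr x i := by
  have hcoord : b.coord (τ i) ∘ₗ T = c i • b.coord i := by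
    refine b.ext fun j => ?_
    by_cases hji : j = i
    · simp [hji, hTb]
    · simp [hTb, Finsupp.single_eq_of_ne' hji, Finsupp.single_eq_of_ne' (hτ.ne hji)]
  simpa using LinearMap.congr_fun hcoord x

variable [Nontrivial R]

theorem eq_of_apply_eq_smul {i j : ι} {a : R} (h : b i = a • b j) : i = j := by
  by_contra hij
  have := congrArg (fun x => b.repr x i) h
  simp [Ne.symm hij] at this

theorem coeff_ne_zero_of_map_apply (hT : Function.Injective T)
    (hTb : ∀ i, T (b i) = c i • b (τ i)) (i : ι) : c i ≠ 0 := by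
  intro hc
  have hTbi := hTb i
  rw [hc, zero_smul, ← T.map_zero] at hTbi
  exact b.ne_zero i (hT hTbi)

end CommSemiring

variable {K M ι : Type*} [Field K] [AddCommGroup M] [Module K M] (b : Basis ι K M)
  {T : M →ₗ[K] M} {c : ι → K} {τ : ι → ι}

theorem injective_index_of_map_apply (hT : Function.Injective T)
    (hTb : ∀ i, T (b i) = c i • b (τ i)) : Function.Injective τ := by
  intro i j hij
  have hmap : T (c j • b i) = T (c i • b j) := by
    rw [T.map_smul, T.map_smul, hTb, hTb, hij, smul_smul, smul_smul, mul_comm]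
  have hsmul := (eq_inv_smul_iff₀ (b.coeff_ne_zero_of_map_apply hT hTb j)).mpr (hT hmap)
  rw [smul_smul] at hsmul
  exact b.eq_of_apply_eq_smul hsmul

end Module.Basis

theorem semiMultiplicative_satisfies_2_1_general
    (F : Type*) [Field F] (D : Type*) [DivisionRing D] [Algebra F D]
    {ι : Type*} (B : Module.Basis ι F D)
    (hsm : ∀ u v : ι, ∃ c : F, ∃ l : ι, B u * B v = c • B l) :
    ∀ f w z : ι, B.coord f ((B w)⁻¹ * B z) = B.coord w (B z * (B f)⁻¹) := by
  intro f w z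
  choose c σ hσ using hsm
  have hleft_inj : Function.Injective (LinearMap.mulLeft F (B w)) :=
    mul_right_injective₀ (B.ne_zero w)
  have hright_inj : Function.Injective (LinearMap.mulRight F (B f)) :=
    mul_left_injective₀ (B.ne_zero f)
  have hleft_map : ∀ g, LinearMap.mulLeft F (B w) (B g) = c w g • B (σ w g) := hσ w
  have hright_map : ∀ g, LinearMap.mulRight F (B f) (B g) = c g f • B (σ g f) := (hσ · f)
  have hleft := B.repr_map_apply_index
    (B.injective_index_of_map_apply hleft_inj hleft_map) hleft_map ((B w)⁻¹ * B z) f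
  have hright := B.repr_map_apply_index
    (B.injective_index_of_map_apply hright_inj hright_map) hright_map (B z * (B f)⁻¹) w
  simp only [LinearMap.mulLeft_apply, LinearMap.mulRight_apply, mul_inv_cancel_left₀ (B.ne_zero w),
    inv_mul_cancel_right₀ (B.ne_zero f)] at hleft hright
  simp only [Module.Basis.coord_apply]
  exact mul_left_cancel₀ (B.coeff_ne_zero_of_map_apply hleft_inj hleft_map f)
    (hleft.symm.trans hright)

/-- Condition (2.1) for a semi-multiplicative basis of a division algebra:
if `L` is a semi-multiplicative `F`-basis of a finite-dimensional division
`F`-algebra `D`, then `f*(w⁻¹·z) = w*(z·f⁻¹)` for all `f, w, z ∈ L`. -/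
theorem semiMultiplicative_satisfies_2_1
    (F : Type*) [Field F] (D : Type*) [DivisionRing D] [Algebra F D]
    [FiniteDimensional F D] {ι : Type*} (B : Module.Basis ι F D)
    (hsm : ∀ u v : ι, ∃ c : F, ∃ l : ι, B u * B v = c • B l) :
    ∀ f w z : ι, B.coord f ((B w)⁻¹ * B z) = B.coord w (B z * (B f)⁻¹) :=
  semiMultiplicative_satisfies_2_1_general F D B hsm
end

section
/- Let F be a field and D a division ring containing F in its center and finite-dimensional over F, and let L be an F-basis of D such that the family of inverses (w⁻¹)_{w ∈ L} is also an F-basis of D. If L is semi-multiplicative (for all u, v ∈ L there exist c ∈ F and ℓ ∈ L with u·v = c·ℓ), then L satisfies condition (2.2): f*(z·w) = (w⁻¹)*(f⁻¹·z) for all f, w, z ∈ L, and condition (2.3): z*(w·f) = (w⁻¹)*(f·z⁻¹) for all f, w, z ∈ L. -/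
/-!
Write `B u * B v = c u v • B (l u v)`. Since `c u v ≠ 0`, left cancellation by `B z` and linear
independence of `B` make `l z` injective, hence bijective as the index set is finite; likewise
for `fun w => l w f`. For (2.2) take the `w₀` with `l z w₀ = f`: then
`(B f)⁻¹ * B z = c z w₀ • (B w₀)⁻¹`, so both sides equal `c z w₀` when `w = w₀` and vanish
otherwise. (2.3) is the mirror image, using `w₀` with `l w₀ f = z`.
-/

section DivisionRing

variable {R D : Type*} [CommSemiring R] [DivisionRing D] [Algebra R D]

theorem inv_mul_eq_smul_inv_of_mul_eq_smul {x y u : D} {c : R} (hy : y ≠ 0) (hu : u ≠ 0)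
    (h : x * y = c • u) : u⁻¹ * x = c • y⁻¹ :=
  calc u⁻¹ * x = u⁻¹ * (x * y) * y⁻¹ := by rw [mul_assoc, mul_inv_cancel_right₀ hy]
    _ = c • y⁻¹ := by rw [h, mul_smul_comm, inv_mul_cancel₀ hu, smul_mul_assoc, one_mul]

theorem mul_inv_eq_smul_inv_of_mul_eq_smul {x y u : D} {c : R} (hx : x ≠ 0) (hu : u ≠ 0)
    (h : x * y = c • u) : y * u⁻¹ = c • x⁻¹ :=
  calc y * u⁻¹ = x⁻¹ * (x * y) * u⁻¹ := by rw [inv_mul_cancel_left₀ hx]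
    _ = c • x⁻¹ := by rw [h, mul_smul_comm, smul_mul_assoc, mul_assoc, mul_inv_cancel₀ hu, mul_one]

end DivisionRing

theorem Finsupp.single_apply_comp_injective {ι M : Type*} [Zero M] {g : ι → ι}
    (hg : Function.Injective g) (c : ι → M) (w w₀ : ι) :
    Finsupp.single (g w) (c w) (g w₀) = Finsupp.single w₀ (c w₀) w := by
  by_cases hw : w = w₀
  · rw [hw, Finsupp.single_eq_same, Finsupp.single_eq_same]
  · rw [Finsupp.single_apply_left hg, Finsupp.single_eq_of_ne hw,
      Finsupp.single_eq_of_ne (Ne.symm hw)]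

theorem Module.Basis.coord_smul_self {ι K V : Type*} [CommSemiring K] [AddCommMonoid V]
    [Module K V] (B : Module.Basis ι K V) (c : K) (i j : ι) :
    B.coord j (c • B i) = Finsupp.single i c j := by
  rw [map_smul, B.coord_apply, B.repr_self, ← Finsupp.smul_apply, Finsupp.smul_single_one]

namespace Module.Basis

variable {F D ι : Type*} [Field F] [DivisionRing D] [Algebra F D] (B : Module.Basis ι F D)
  {c : ι → ι → F} {l : ι → ι → ι} (hmul : ∀ u v, B u * B v = c u v • B (l u v))
include hmul

theorem mul_coeff_ne_zero (u v : ι) : c u v ≠ 0 := by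
  intro hc
  have h := hmul u v
  rw [hc, zero_smul] at h
  exact mul_ne_zero (B.ne_zero u) (B.ne_zero v) h

theorem injective_mul_index_left (z : ι) : Function.Injective (l z) := by
  intro w₁ w₂ hw
  have h : B z * (c z w₂ • B w₁) = B z * (c z w₁ • B w₂) := by
    rw [mul_smul_comm, mul_smul_comm, hmul, hmul, hw, smul_smul, smul_smul, mul_comm]
  exact B.linearIndependent.eq_of_smul_apply_eq_smul_apply _ _ _ _
    (B.mul_coeff_ne_zero hmul z w₂) (mul_left_cancel₀ (B.ne_zero z) h)

theorem injective_mul_index_right (f : ι) : Function.Injective (fun w => l w f) := by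
  intro w₁ w₂ (hw : l w₁ f = l w₂ f)
  have h : (c w₂ f • B w₁) * B f = (c w₁ f • B w₂) * B f := by
    rw [smul_mul_assoc, smul_mul_assoc, hmul, hmul, hw, smul_smul, smul_smul, mul_comm]
  exact B.linearIndependent.eq_of_smul_apply_eq_smul_apply _ _ _ _
    (B.mul_coeff_ne_zero hmul w₂ f) (mul_right_cancel₀ (B.ne_zero f) h)

variable [Finite ι] {B' : Module.Basis ι F D} (hB' : ∀ w, B' w = (B w)⁻¹)
include hB'

theorem coord_mul_eq_coord_inv_mul (f w z : ι) :
    B.coord f (B z * B w) = B'.coord w ((B f)⁻¹ * B z) := by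
  obtain ⟨w₀, rfl⟩ := Finite.surjective_of_injective (B.injective_mul_index_left hmul z) f
  rw [hmul, inv_mul_eq_smul_inv_of_mul_eq_smul (B.ne_zero w₀) (B.ne_zero _) (hmul z w₀), ← hB',
    coord_smul_self, coord_smul_self]
  exact Finsupp.single_apply_comp_injective (B.injective_mul_index_left hmul z) (c z) w w₀

theorem coord_mul_eq_coord_mul_inv (f w z : ι) :
    B.coord z (B w * B f) = B'.coord w (B f * (B z)⁻¹) := by
  obtain ⟨w₀, rfl⟩ := Finite.surjective_of_injective (B.injective_mul_index_right hmul f) z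
  rw [hmul, mul_inv_eq_smul_inv_of_mul_eq_smul (B.ne_zero w₀) (B.ne_zero _) (hmul w₀ f), ← hB',
    coord_smul_self, coord_smul_self]
  exact Finsupp.single_apply_comp_injective (B.injective_mul_index_right hmul f)
    (fun w => c w f) w w₀

end Module.Basis

/-- Conditions (2.2) and (2.3) for a semi-multiplicative basis of a division
algebra: if `L` is a semi-multiplicative `F`-basis of a finite-dimensional
division `F`-algebra `D`, whose family of inverses is again an `F`-basis, then
`f*(z·w) = (w⁻¹)*(f⁻¹·z)` and `z*(w·f) = (w⁻¹)*(f·z⁻¹)` for all `f, w, z ∈ L`. -/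
theorem semiMultiplicative_satisfies_2_2_and_2_3
    (F : Type*) [Field F] (D : Type*) [DivisionRing D] [Algebra F D]
    [FiniteDimensional F D] {ι : Type*} (B : Module.Basis ι F D)
    (B' : Module.Basis ι F D) (hB' : ∀ w : ι, B' w = (B w)⁻¹)
    (hsm : ∀ u v : ι, ∃ c : F, ∃ l : ι, B u * B v = c • B l) :
    (∀ f w z : ι, B.coord f (B z * B w) = B'.coord w ((B f)⁻¹ * B z)) ∧
    (∀ f w z : ι, B.coord z (B w * B f) = B'.coord w (B f * (B z)⁻¹)) := by
  choose c l hmul using hsm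
  have : Finite ι := Module.Finite.finite_basis B
  exact ⟨B.coord_mul_eq_coord_inv_mul hmul hB', B.coord_mul_eq_coord_mul_inv hmul hB'⟩
end

section
/- Let F ⊆ F₁ ⊆ F₂ be a tower of fields with F₁ finite-dimensional over F and F₂ finite-dimensional over F₁, let L₁ be an F-basis of F₁ and L₂ an F₁-basis of F₂, so that the products {x·y : x ∈ L₁, y ∈ L₂} (indexed by L₁ × L₂) form an F-basis of F₂. If L₁ satisfies condition (2.1) over F and L₂ satisfies condition (2.1) over F₁, then the product basis satisfies condition (2.1) over F: for all f₁, w₁, z₁ ∈ L₁ and f₂, w₂, z₂ ∈ L₂, (f₁f₂)*((w₁w₂)⁻¹·(z₁z₂)) = (w₁w₂)*((z₁z₂)·(f₁f₂)⁻¹), where ( )* denotes coordinate functionals of the product basis. -/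
/-!
Writing the product basis as `Module.Basis.smulTower`, its coordinate at `(a, b)` is
`a* ∘ b*`, and both sides of (2.1) split as an `F₁`-scalar times an element of `F₂`. The
`F₁`-linearity of `b*` together with (2.1) for `L₂` pulls out a common factor
`A = w₂*(z₂ f₂⁻¹) ∈ F₁`, and what remains is (2.1) for `L₁` applied to `z₁ A` in place of
a basis element, which holds because both sides of (2.1) are linear in `z`.
-/

namespace Module.Basis

theorem smulTower_coord {R S A ι ι' : Type*} [CommSemiring R] [Semiring S] [AddCommMonoid A]
    [Module R S] [Module S A] [Module R A] [IsScalarTower R S A]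
    (b : Basis ι R S) (c : Basis ι' S A) (i : ι) (j : ι') (x : A) :
    (b.smulTower c).coord (i, j) x = b.coord i (c.coord j x) :=
  b.smulTower_repr_mk c x i j

theorem coord_inv_mul_eq_coord_mul_inv {ι K D : Type*} [CommSemiring K] [DivisionRing D] [Algebra K D]
    (B : Basis ι K D)
    (h : ∀ f w z : ι, B.coord f ((B w)⁻¹ * B z) = B.coord w (B z * (B f)⁻¹))
    (f w : ι) (x : D) :
    B.coord f ((B w)⁻¹ * x) = B.coord w (x * (B f)⁻¹) := by
  have hlin : (B.coord f).comp (LinearMap.mulLeft K (B w)⁻¹) =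
      (B.coord w).comp (LinearMap.mulRight K (B f)⁻¹) :=
    B.ext fun z ↦ h f w z
  exact LinearMap.congr_fun hlin x

end Module.Basis

theorem product_basis_satisfies_2_1_general
    (F F₁ F₂ : Type*) [Field F] [Field F₁] [Field F₂]
    [Algebra F F₁] [Algebra F₁ F₂] [Algebra F F₂] [IsScalarTower F F₁ F₂]
    {ι₁ ι₂ : Type*} (B₁ : Module.Basis ι₁ F F₁) (B₂ : Module.Basis ι₂ F₁ F₂)
    (B : Module.Basis (ι₁ × ι₂) F F₂)
    (hB : ∀ (x : ι₁) (y : ι₂), B (x, y) = algebraMap F₁ F₂ (B₁ x) * B₂ y)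
    (h1 : ∀ f w z : ι₁, B₁.coord f ((B₁ w)⁻¹ * B₁ z) = B₁.coord w (B₁ z * (B₁ f)⁻¹))
    (h2 : ∀ f w z : ι₂, B₂.coord f ((B₂ w)⁻¹ * B₂ z) = B₂.coord w (B₂ z * (B₂ f)⁻¹)) :
    ∀ f w z : ι₁ × ι₂, B.coord f ((B w)⁻¹ * B z) = B.coord w (B z * (B f)⁻¹) := by
  obtain rfl : B = B₁.smulTower B₂ :=
    Module.Basis.eq_of_apply_eq fun ⟨x, y⟩ ↦ by rw [hB, ← Algebra.smul_def]; simp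
  rintro ⟨f₁, f₂⟩ ⟨w₁, w₂⟩ ⟨z₁, z₂⟩
  simp only [Module.Basis.smulTower_apply, Module.Basis.smulTower_coord, smul_inv₀,
    smul_mul_smul_comm, map_smul, smul_eq_mul, h2 f₂ w₂ z₂]
  set A := B₂.coord w₂ (B₂ z₂ * (B₂ f₂)⁻¹)
  calc B₁.coord f₁ ((B₁ w₁)⁻¹ * B₁ z₁ * A)
      = B₁.coord f₁ ((B₁ w₁)⁻¹ * (B₁ z₁ * A)) := by rw [mul_assoc]
    _ = B₁.coord w₁ (B₁ z₁ * A * (B₁ f₁)⁻¹) := B₁.coord_inv_mul_eq_coord_mul_inv h1 f₁ w₁ _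
    _ = B₁.coord w₁ (B₁ z₁ * (B₁ f₁)⁻¹ * A) := by rw [mul_right_comm]

/-- Condition (2.1) passes to product bases in a tower of fields: if `L₁` is an
`F`-basis of `F₁` satisfying (2.1) and `L₂` is an `F₁`-basis of `F₂` satisfying
(2.1), then the product `F`-basis `{x·y : x ∈ L₁, y ∈ L₂}` of `F₂` satisfies
(2.1). -/
theorem product_basis_satisfies_2_1
    (F F₁ F₂ : Type*) [Field F] [Field F₁] [Field F₂]
    [Algebra F F₁] [Algebra F₁ F₂] [Algebra F F₂] [IsScalarTower F F₁ F₂]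
    [FiniteDimensional F F₁] [FiniteDimensional F₁ F₂]
    {ι₁ ι₂ : Type*} (B₁ : Module.Basis ι₁ F F₁) (B₂ : Module.Basis ι₂ F₁ F₂)
    (B : Module.Basis (ι₁ × ι₂) F F₂)
    (hB : ∀ (x : ι₁) (y : ι₂), B (x, y) = algebraMap F₁ F₂ (B₁ x) * B₂ y)
    (h1 : ∀ f w z : ι₁, B₁.coord f ((B₁ w)⁻¹ * B₁ z) = B₁.coord w (B₁ z * (B₁ f)⁻¹))
    (h2 : ∀ f w z : ι₂, B₂.coord f ((B₂ w)⁻¹ * B₂ z) = B₂.coord w (B₂ z * (B₂ f)⁻¹)) :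
    ∀ f w z : ι₁ × ι₂, B.coord f ((B w)⁻¹ * B z) = B.coord w (B z * (B f)⁻¹) :=
  product_basis_satisfies_2_1_general F F₁ F₂ B₁ B₂ B hB h1 h2
end

section
/- Let F ⊆ F₁ ⊆ F₂ be a tower of fields with F₁ finite-dimensional over F and F₂ finite-dimensional over F₁, let L₁ be an F-basis of F₁ and L₂ an F₁-basis of F₂ such that the inverse families (x⁻¹)_{x ∈ L₁} and (y⁻¹)_{y ∈ L₂} are again bases of F₁ over F and of F₂ over F₁, respectively. If L₁ satisfies conditions (2.2) and (2.3) over F and L₂ satisfies conditions (2.2) and (2.3) over F₁, then the family ((x·y)⁻¹)_{(x,y) ∈ L₁ × L₂} = (x⁻¹·y⁻¹) is an F-basis of F₂, and the product F-basis {x·y : x ∈ L₁, y ∈ L₂} of F₂ satisfies conditions (2.2) and (2.3) over F. -/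
/-! Write `B = B₁.smulTower B₂`, so that `B (x, y) = B₁ x • B₂ y` and
`B.coord (i, j) (s • v) = B₁.coord i (s * B₂.coord j v)`. Both sides of (2.2) and (2.3) for `B`
then factor through `B₂`, where (2.2), resp. (2.3), for `B₂` turns the inner `F₁`-coordinate of
the left side into that of the right side. What remains is (2.2), resp. (2.3), for `B₁` with one
basis element replaced by an arbitrary element of `F₁`, which holds by `F`-linearity. -/

namespace Module.Basis

section LinearExtension

variable {ι R A M : Type*} [CommSemiring R] [Semiring A] [Algebra R A]
  [AddCommMonoid M] [Module R M]

theorem map_mul_right_eq_of_basis (b : Basis ι R A) {φ ψ : A →ₗ[R] M} {a c : A}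
    (h : ∀ i, φ (b i * a) = ψ (c * b i)) (v : A) : φ (v * a) = ψ (c * v) :=
  LinearMap.congr_fun
    (b.ext (f₁ := φ ∘ₗ LinearMap.mulRight R a) (f₂ := ψ ∘ₗ LinearMap.mulLeft R c) h) v

theorem map_mul_left_eq_of_basis (b : Basis ι R A) {φ ψ : A →ₗ[R] M} {a c : A}
    (h : ∀ i, φ (a * b i) = ψ (b i * c)) (v : A) : φ (a * v) = ψ (v * c) :=
  LinearMap.congr_fun
    (b.ext (f₁ := φ ∘ₗ LinearMap.mulLeft R a) (f₂ := ψ ∘ₗ LinearMap.mulRight R c) h) v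

end LinearExtension

theorem smulTower_coord_smul {ι ι' R S A : Type*} [CommSemiring R] [CommSemiring S]
    [AddCommMonoid A] [Module R S] [Module S A] [Module R A] [IsScalarTower R S A]
    (b : Basis ι R S) (c : Basis ι' S A) (i : ι) (j : ι') (s : S) (v : A) :
    (b.smulTower c).coord (i, j) (s • v) = b.coord i (s * c.coord j v) := by
  simp only [coord_apply, smulTower_repr_mk, map_smul, Finsupp.smul_apply, smul_eq_mul]

end Module.Basis

open Module.Basis

theorem product_basis_satisfies_2_2_and_2_3_general
    (F F₁ F₂ : Type*) [Field F] [Field F₁] [Field F₂]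
    [Algebra F F₁] [Algebra F₁ F₂] [Algebra F F₂] [IsScalarTower F F₁ F₂]
    {ι₁ ι₂ : Type*} (B₁ : Module.Basis ι₁ F F₁) (B₂ : Module.Basis ι₂ F₁ F₂)
    (B₁' : Module.Basis ι₁ F F₁) (hB₁' : ∀ x : ι₁, B₁' x = (B₁ x)⁻¹)
    (B₂' : Module.Basis ι₂ F₁ F₂) (hB₂' : ∀ y : ι₂, B₂' y = (B₂ y)⁻¹)
    (B : Module.Basis (ι₁ × ι₂) F F₂)
    (hB : ∀ (x : ι₁) (y : ι₂), B (x, y) = algebraMap F₁ F₂ (B₁ x) * B₂ y)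
    (h22₁ : ∀ f w z : ι₁, B₁.coord f (B₁ z * B₁ w) = B₁'.coord w ((B₁ f)⁻¹ * B₁ z))
    (h23₁ : ∀ f w z : ι₁, B₁.coord z (B₁ w * B₁ f) = B₁'.coord w (B₁ f * (B₁ z)⁻¹))
    (h22₂ : ∀ f w z : ι₂, B₂.coord f (B₂ z * B₂ w) = B₂'.coord w ((B₂ f)⁻¹ * B₂ z))
    (h23₂ : ∀ f w z : ι₂, B₂.coord z (B₂ w * B₂ f) = B₂'.coord w (B₂ f * (B₂ z)⁻¹)) :
    ∃ B' : Module.Basis (ι₁ × ι₂) F F₂,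
      (∀ p : ι₁ × ι₂, B' p = (B p)⁻¹) ∧
      (∀ f w z : ι₁ × ι₂, B.coord f (B z * B w) = B'.coord w ((B f)⁻¹ * B z)) ∧
      (∀ f w z : ι₁ × ι₂, B.coord z (B w * B f) = B'.coord w (B f * (B z)⁻¹)) := by
  obtain rfl : B = B₁.smulTower B₂ :=
    eq_of_apply_eq fun ⟨x, y⟩ => by rw [smulTower_apply, Algebra.smul_def, hB]
  refine ⟨B₁'.smulTower B₂', fun ⟨x, y⟩ => ?_, fun ⟨f₁, f₂⟩ ⟨w₁, w₂⟩ ⟨z₁, z₂⟩ => ?_,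
    fun ⟨f₁, f₂⟩ ⟨w₁, w₂⟩ ⟨z₁, z₂⟩ => ?_⟩
  · simp only [smulTower_apply, hB₁', hB₂', smul_inv₀]
  · simp only [smulTower_apply, smul_inv₀, smul_mul_smul_comm, smulTower_coord_smul, h22₂]
    rw [mul_comm, ← mul_assoc, map_mul_right_eq_of_basis B₁ (h22₁ f₁ w₁)]
    congr 1
    ring
  · simp only [smulTower_apply, smul_inv₀, smul_mul_smul_comm, smulTower_coord_smul, h23₂]
    rw [mul_assoc, map_mul_left_eq_of_basis B₁ (fun f => h23₁ f w₁ z₁), mul_right_comm]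

/-- Conditions (2.2) and (2.3) pass to product bases in a tower of fields: if
`L₁` is an `F`-basis of `F₁` and `L₂` an `F₁`-basis of `F₂`, both of whose
families of inverses are again bases, and both satisfy (2.2) and (2.3), then
the family of inverses of the product basis `{x·y}` is again an `F`-basis of
`F₂` and the product basis satisfies (2.2) and (2.3). -/
theorem product_basis_satisfies_2_2_and_2_3
    (F F₁ F₂ : Type*) [Field F] [Field F₁] [Field F₂]
    [Algebra F F₁] [Algebra F₁ F₂] [Algebra F F₂] [IsScalarTower F F₁ F₂]
    [FiniteDimensional F F₁] [FiniteDimensional F₁ F₂]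
    {ι₁ ι₂ : Type*} (B₁ : Module.Basis ι₁ F F₁) (B₂ : Module.Basis ι₂ F₁ F₂)
    (B₁' : Module.Basis ι₁ F F₁) (hB₁' : ∀ x : ι₁, B₁' x = (B₁ x)⁻¹)
    (B₂' : Module.Basis ι₂ F₁ F₂) (hB₂' : ∀ y : ι₂, B₂' y = (B₂ y)⁻¹)
    (B : Module.Basis (ι₁ × ι₂) F F₂)
    (hB : ∀ (x : ι₁) (y : ι₂), B (x, y) = algebraMap F₁ F₂ (B₁ x) * B₂ y)
    (h22₁ : ∀ f w z : ι₁, B₁.coord f (B₁ z * B₁ w) = B₁'.coord w ((B₁ f)⁻¹ * B₁ z))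
    (h23₁ : ∀ f w z : ι₁, B₁.coord z (B₁ w * B₁ f) = B₁'.coord w (B₁ f * (B₁ z)⁻¹))
    (h22₂ : ∀ f w z : ι₂, B₂.coord f (B₂ z * B₂ w) = B₂'.coord w ((B₂ f)⁻¹ * B₂ z))
    (h23₂ : ∀ f w z : ι₂, B₂.coord z (B₂ w * B₂ f) = B₂'.coord w (B₂ f * (B₂ z)⁻¹)) :
    ∃ B' : Module.Basis (ι₁ × ι₂) F F₂,
      (∀ p : ι₁ × ι₂, B' p = (B p)⁻¹) ∧
      (∀ f w z : ι₁ × ι₂, B.coord f (B z * B w) = B'.coord w ((B f)⁻¹ * B z)) ∧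
      (∀ f w z : ι₁ × ι₂, B.coord z (B w * B f) = B'.coord w (B f * (B z)⁻¹)) :=
  product_basis_satisfies_2_2_and_2_3_general F F₁ F₂ B₁ B₂ B₁' hB₁' B₂' hB₂' B hB h22₁ h23₁ h22₂
    h23₂
end

section
/- Let F be a field and D a division ring containing F in its center and finite-dimensional over F, and let L be an F-basis of D such that the family of inverses (w⁻¹)_{w ∈ L} is also an F-basis of D. Suppose L satisfies condition (2.2): f*(z·w) = (w⁻¹)*(f⁻¹·z) for all f, w, z ∈ L. Then for all r, v ∈ L one has ∑_{t ∈ L} r*(v·t)·t⁻¹ = r⁻¹·v in D. -/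
theorem sum_coord_mul_inv_eq_general
    (F : Type*) [Field F] (D : Type*) [DivisionRing D] [Algebra F D]
    {ι : Type*} [Fintype ι] (B : Module.Basis ι F D)
    (B' : Module.Basis ι F D) (hB' : ∀ w : ι, B' w = (B w)⁻¹)
    (h22 : ∀ f w z : ι, B.coord f (B z * B w) = B'.coord w ((B f)⁻¹ * B z)) :
    ∀ r v : ι, ∑ t : ι, B.coord r (B v * B t) • (B t)⁻¹ = (B r)⁻¹ * B v := by
  intro r v
  -- By (2.2) the coefficients are the `B'`-coordinates of `r⁻¹ v`, so the sum is its `B'`-expansion.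
  simp_rw [h22 r, ← hB']
  exact B'.sum_repr _

/-- Equation (2.4): if an `F`-basis `L` of a finite-dimensional division
`F`-algebra `D`, whose family of inverses is again an `F`-basis, satisfies
condition (2.2), then for all `r, v ∈ L` we have
`∑_{t ∈ L} r*(v·t)·t⁻¹ = r⁻¹·v`. -/
theorem sum_coord_mul_inv_eq
    (F : Type*) [Field F] (D : Type*) [DivisionRing D] [Algebra F D]
    [FiniteDimensional F D] {ι : Type*} [Fintype ι] (B : Module.Basis ι F D)
    (B' : Module.Basis ι F D) (hB' : ∀ w : ι, B' w = (B w)⁻¹)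
    (h22 : ∀ f w z : ι, B.coord f (B z * B w) = B'.coord w ((B f)⁻¹ * B z)) :
    ∀ r v : ι, ∑ t : ι, B.coord r (B v * B t) • (B t)⁻¹ = (B r)⁻¹ * B v :=
  sum_coord_mul_inv_eq_general F D B B' hB' h22
end

section
/- Let F be a field, D a division ring containing F in its center and finite-dimensional over F, and L an F-basis of D with 1 ∈ L and satisfying condition (2.1). Let (N_a)_{a ∈ A} be a family of F-vector spaces and let N_in = ⊕_{a ∈ A} (D ⊗_F N_a), which is a left D-module via d·(d' ⊗ n) = (d·d') ⊗ n on each summand. For r ∈ L and a ∈ A let π_{r,a} : N_in → N_a be the composite of the canonical projection onto the summand D ⊗_F N_a with the F-linear map r* ⊗ id_{N_a}. Then for every r ∈ L, every a ∈ A and every m ∈ N_in one has π_{1,a}(r⁻¹·m) = π_{r,a}(m). -/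
open TensorProduct DirectSum

theorem Module.Basis.coord_comp_mulLeft_inv {F D ι : Type*} [Field F] [DivisionRing D]
    [Algebra F D] (B : Module.Basis ι F D) {i₀ : ι} (hi₀ : B i₀ = 1)
    (h21 : ∀ f w z : ι, B.coord f ((B w)⁻¹ * B z) = B.coord w (B z * (B f)⁻¹)) (w : ι) :
    B.coord i₀ ∘ₗ LinearMap.mulLeft F (B w)⁻¹ = B.coord w :=
  B.ext fun z => by simpa [hi₀] using h21 i₀ w z

theorem TensorProduct.lift_lsmul_comp_smul {R S M : Type*} [CommSemiring R] [Semiring S]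
    [Algebra R S] [AddCommMonoid M] [Module R M] {φ ψ : S →ₗ[R] R} {s : S}
    (h : φ ∘ₗ LinearMap.mulLeft R s = ψ) (x : S ⊗[R] M) :
    lift (LinearMap.lsmul R M ∘ₗ φ) (s • x) = lift (LinearMap.lsmul R M ∘ₗ ψ) x := by
  induction x using TensorProduct.induction_on with
  | zero => simp
  | tmul t n => simp [smul_tmul', ← h]
  | add x y hx hy => simp only [smul_add, map_add, hx, hy]

theorem pi_one_smul_inv_eq_pi_general
    (F : Type*) [Field F] (D : Type*) [DivisionRing D] [Algebra F D]
    {ι : Type*} (B : Module.Basis ι F D)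
    (i₀ : ι) (hi₀ : B i₀ = 1)
    (h21 : ∀ f w z : ι, B.coord f ((B w)⁻¹ * B z) = B.coord w (B z * (B f)⁻¹))
    (A : Type*) (N : A → Type*) [∀ a, AddCommGroup (N a)] [∀ a, Module F (N a)]
    (r : ι) (a : A) (m : ⨁ a, D ⊗[F] N a) :
    (TensorProduct.lift ((LinearMap.lsmul F (N a)).comp (B.coord i₀)))
        ((DirectSum.component D A (fun a => D ⊗[F] N a) a) ((B r)⁻¹ • m))
      = (TensorProduct.lift ((LinearMap.lsmul F (N a)).comp (B.coord r)))
        ((DirectSum.component D A (fun a => D ⊗[F] N a) a) m) := by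
  rw [map_smul]
  exact lift_lsmul_comp_smul (B.coord_comp_mulLeft_inv hi₀ h21 r) _

/-- Lemma 2.3 (Lemma `lem2` of the paper): with `N_in = ⊕ₐ (D ⊗_F N_a)` and the
projections `π_{r,a} : N_in → N_a` given by the coordinate functional of the
basis `L` at `r` on the tensor factor `D`, one has
`π_{1,a}(r⁻¹ · m) = π_{r,a}(m)` for all `r ∈ L`, `a` and `m ∈ N_in`,
provided `1 ∈ L` and `L` satisfies condition (2.1). -/
theorem pi_one_smul_inv_eq_pi
    (F : Type*) [Field F] (D : Type*) [DivisionRing D] [Algebra F D]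
    [FiniteDimensional F D] {ι : Type*} (B : Module.Basis ι F D)
    (i₀ : ι) (hi₀ : B i₀ = 1)
    (h21 : ∀ f w z : ι, B.coord f ((B w)⁻¹ * B z) = B.coord w (B z * (B f)⁻¹))
    (A : Type*) (N : A → Type*) [∀ a, AddCommGroup (N a)] [∀ a, Module F (N a)]
    (r : ι) (a : A) (m : ⨁ a, D ⊗[F] N a) :
    (TensorProduct.lift ((LinearMap.lsmul F (N a)).comp (B.coord i₀)))
        ((DirectSum.component D A (fun a => D ⊗[F] N a) a) ((B r)⁻¹ • m))
      = (TensorProduct.lift ((LinearMap.lsmul F (N a)).comp (B.coord r)))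
        ((DirectSum.component D A (fun a => D ⊗[F] N a) a) m) :=
  pi_one_smul_inv_eq_pi_general F D B i₀ hi₀ h21 A N r a m
end
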